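/- Let g : ℝ → ℂ be an even Schwartz function and define h(η) := ∫_η^∞ (2/s) e^{−(s² − η²)} g(s) ds for η ≥ 0. Then h is continuously differentiable on (0,∞), satisfies η² h(η) − (1/2) η h'(η) = g(η) for all η > 0, and there exists an absolute constant C > 0 (independent of g) such that ∫₀^∞ η⁶ |h(η)|² dη ≤ C ∫₀^∞ s⁶ |g(s)|² ds. -/

import Mathlib

open MeasureTheory Set Filter Topology
open scoped ENNReal

/-- `h(η) = ∫_η^∞ (2/s) e^{−(s²−η²)} g(s) ds`. -/
noncomputable def hFun (g : ℝ → ℂ) (η : ℝ) : ℂ :=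
  ∫ s in Ioi η, ((2 / s * Real.exp (-(s^2 - η^2)) : ℝ) : ℂ) * g s

namespace Aux8

variable (g : SchwartzMap ℝ ℂ)

noncomputable def phi (s : ℝ) : ℂ := ((2 / s * Real.exp (-s^2) : ℝ) : ℂ) * g s

noncomputable def Ff (η : ℝ) : ℂ := ∫ s in Ioi η, phi g s

lemma gBound : ∃ M : ℝ, ∀ x : ℝ, ‖g x‖ ≤ M := by
  obtain ⟨C, hC⟩ := g.decay 0 0
  exact ⟨C, fun x => by simpa using hC.2 x⟩

lemma phi_meas {a : ℝ} (ha : 0 < a) :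
    AEStronglyMeasurable (phi g) (volume.restrict (Ioi a)) := by
  have c : ContinuousOn (fun s : ℝ => ((2 / s * Real.exp (-s^2) : ℝ) : ℂ)) (Ioi a) :=
    Complex.continuous_ofReal.comp_continuousOn
      ((continuousOn_const.div continuousOn_id (fun s hs => ne_of_gt (lt_trans ha hs))).mul
        ((Real.continuous_exp.comp (continuous_pow 2).neg).continuousOn))
  exact (c.mul g.continuous.continuousOn).aestronglyMeasurable measurableSet_Ioi

lemma phi_int {a : ℝ} (ha : 0 < a) : IntegrableOn (phi g) (Ioi a) := by
  obtain ⟨M, hM⟩ := gBound g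
  have hM0 : 0 ≤ M := le_trans (norm_nonneg _) (hM 0)
  have hbd : Integrable (fun s : ℝ => 2 / a * M * Real.exp (-s^2)) := by
    have : Integrable (fun s : ℝ => Real.exp (-1 * s^2)) := integrable_exp_neg_mul_sq one_pos
    simpa using this.const_mul (2 / a * M)
  refine Integrable.mono' (hbd.integrableOn) (phi_meas g ha) ?_
  filter_upwards [ae_restrict_mem measurableSet_Ioi] with s hs
  have hsa : a < s := hs
  have hs0 : 0 < s := lt_trans ha hsa
  have h1 : ‖phi g s‖ = |2 / s| * Real.exp (-s^2) * ‖g s‖ := by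
    rw [phi, norm_mul]
    rw [Complex.norm_real, Real.norm_eq_abs, abs_mul, abs_of_pos (Real.exp_pos _)]
  rw [h1]
  have h2 : |2 / s| ≤ 2 / a := by
    rw [abs_of_pos (by positivity)]
    exact div_le_div_of_nonneg_left (by norm_num) ha hsa.le
  calc |2 / s| * Real.exp (-s^2) * ‖g s‖ ≤ (2/a) * Real.exp (-s^2) * M := by
        gcongr; exact hM s
    _ = 2 / a * M * Real.exp (-s^2) := by ring


lemma hFun_eq (t : ℝ) : hFun ⇑g t = ((Real.exp (t^2) : ℝ) : ℂ) * Ff g t := by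
  rw [hFun, Ff, ← integral_const_mul]
  refine setIntegral_congr_fun measurableSet_Ioi fun s _ => ?_
  rw [phi, ← mul_assoc]
  congr 1
  have : -(s^2 - t^2) = t^2 + -s^2 := by ring
  rw [this, Real.exp_add]
  push_cast
  ring

lemma hasDeriv {η : ℝ} (hη : 0 < η) :
    HasDerivAt (hFun ⇑g) (2*(η:ℂ) * hFun ⇑g η - (2/(η:ℂ)) * g η) η := by
  have h2 : 0 < η/2 := by linarith
  have key : ∀ x ∈ Ioi (η/2), Ff g x = Ff g (η/2) - ∫ s in (η/2)..x, phi g s := by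
    intro x hx
    have hx' : η/2 < x := hx
    have hsplit : Ff g (η/2) = (∫ s in Ioc (η/2) x, phi g s) + Ff g x := by
      rw [Ff, Ff, ← setIntegral_union (Ioc_disjoint_Ioi le_rfl) measurableSet_Ioi
        ((phi_int g h2).mono_set Ioc_subset_Ioi_self) (phi_int g (lt_trans h2 hx')),
        Ioc_union_Ioi_eq_Ioi hx'.le]
    rw [intervalIntegral.integral_of_le hx'.le, hsplit]
    ring
  have hF' : HasDerivAt (Ff g) (-(phi g η)) η := by
    have hd : HasDerivAt (fun x => ∫ s in (η/2)..x, phi g s) (phi g η) η := by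
      refine intervalIntegral.integral_hasDerivAt_right ?_ ?_ ?_
      · rw [intervalIntegrable_iff_integrableOn_Ioc_of_le (by linarith)]
        exact (phi_int g h2).mono_set Ioc_subset_Ioi_self
      · exact ⟨Ioi (η/2), Ioi_mem_nhds (by linarith), phi_meas g h2⟩
      · have hη0 : η ≠ 0 := hη.ne'
        refine ContinuousAt.mul ?_ g.continuous.continuousAt
        refine Complex.continuous_ofReal.continuousAt.comp ?_
        exact ((continuousAt_const.div continuousAt_id hη0).mul
          (Real.continuous_exp.continuousAt.comp ((continuous_pow 2).neg.continuousAt)))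
    have hd2 : HasDerivAt (fun x => Ff g (η/2) - ∫ s in (η/2)..x, phi g s) (-(phi g η)) η := by
      exact ((hasDerivAt_const η (Ff g (η/2))).sub hd).congr_deriv (by simp)
    refine hd2.congr_of_eventuallyEq ?_
    exact Filter.eventuallyEq_of_mem (Ioi_mem_nhds (by linarith : η/2 < η)) key
  have hexp : HasDerivAt (fun t : ℝ => ((Real.exp (t^2) : ℝ) : ℂ))
      ((Real.exp (η^2) * (2*η) : ℝ) : ℂ) η := by
    have hr : HasDerivAt (fun t : ℝ => Real.exp (t^2)) (Real.exp (η^2) * (2*η)) η := by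
      have hp : HasDerivAt (fun t : ℝ => t^2) (2*η) η := by
        simpa using hasDerivAt_pow 2 η
      simpa using hp.exp
    exact hr.ofReal_comp
  have hmul := hexp.mul hF'
  have heq : hFun ⇑g = fun t => ((Real.exp (t^2) : ℝ) : ℂ) * Ff g t := funext (hFun_eq g)
  rw [heq]
  refine hmul.congr_deriv ?_
  symm
  have hphi : ((Real.exp (η^2) : ℝ) : ℂ) * phi g η = (2/(η:ℂ)) * g η := by
    rw [phi, ← mul_assoc]
    congr 1
    have hre : Real.exp (η^2) * (2/η * Real.exp (-η^2)) = 2/η := by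
      rw [← mul_assoc, mul_comm (Real.exp (η^2)), mul_assoc, ← Real.exp_add]
      norm_num
    calc ((Real.exp (η^2) : ℝ) : ℂ) * ((2 / η * Real.exp (-η^2) : ℝ) : ℂ)
        = (((Real.exp (η^2) * (2/η * Real.exp (-η^2))) : ℝ) : ℂ) := by push_cast; ring
      _ = ((2/η : ℝ) : ℂ) := by rw [hre]
      _ = 2/(η:ℂ) := by push_cast; ring
  show 2*(η:ℂ) * (((Real.exp (η^2) : ℝ) : ℂ) * Ff g η) - (2/(η:ℂ)) * g η
      = ((Real.exp (η^2) * (2*η) : ℝ) : ℂ) * Ff g η + ((Real.exp (η^2) : ℝ) : ℂ) * -(phi g η)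
  rw [← hphi]
  push_cast
  ring


end Aux8

open Aux8

lemma myCS {α : Type*} [MeasurableSpace α] {μ : Measure α} {k f : α → ℝ≥0∞}
    (hk : AEMeasurable k μ) (hf : AEMeasurable f μ) :
    (∫⁻ x, k x * f x ∂μ)^2 ≤ (∫⁻ x, k x ∂μ) * (∫⁻ x, k x * f x^2 ∂μ) := by
  have hpq : (2:ℝ).HolderConjugate 2 := Real.HolderConjugate.two_two
  have h := ENNReal.lintegral_mul_le_Lp_mul_Lq μ hpq
    (hk.pow_const (1/2 : ℝ)) ((hk.pow_const (1/2 : ℝ)).mul hf)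
  have e1 : ∀ x : ℝ≥0∞, (x ^ (1/2:ℝ)) ^ (2:ℝ) = x := by
    intro x; rw [← ENNReal.rpow_mul]; norm_num
  have e1' : ∀ x : ℝ≥0∞, (x ^ (1/2:ℝ)) ^ (2:ℕ) = x := by
    intro x; rw [← ENNReal.rpow_natCast (x ^ (1/2:ℝ)) 2, ← ENNReal.rpow_mul]; norm_num
  have e2 : ∀ x y : ℝ≥0∞, x ^ (1/2:ℝ) * (x ^ (1/2:ℝ) * y) = x * y := by
    intro x y
    rw [← mul_assoc, ← ENNReal.rpow_add_of_nonneg (1/2) (1/2) (by norm_num) (by norm_num)]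
    norm_num
  simp only [Pi.mul_apply] at h
  have hL : (∫⁻ x, k x * f x ∂μ) = ∫⁻ x, (k x) ^ (1/2:ℝ) * ((k x) ^ (1/2:ℝ) * f x) ∂μ :=
    lintegral_congr fun x => (e2 _ _).symm
  have hA : (∫⁻ x, ((k x) ^ (1/2:ℝ)) ^ (2:ℝ) ∂μ) = ∫⁻ x, k x ∂μ :=
    lintegral_congr fun x => e1 _
  have hB : (∫⁻ x, ((k x) ^ (1/2:ℝ) * f x) ^ (2:ℝ) ∂μ) = ∫⁻ x, k x * f x ^ 2 ∂μ := by
    refine lintegral_congr fun x => ?_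
    rw [ENNReal.mul_rpow_of_nonneg _ _ (by norm_num : (0:ℝ) ≤ 2), e1,
      ← ENNReal.rpow_natCast (f x) 2]
    norm_num
  rw [hL]
  calc (∫⁻ x, (k x) ^ (1/2:ℝ) * ((k x) ^ (1/2:ℝ) * f x) ∂μ)^2
      ≤ ((∫⁻ x, ((k x) ^ (1/2:ℝ)) ^ (2:ℝ) ∂μ) ^ (1/(2:ℝ)) *
        (∫⁻ x, ((k x) ^ (1/2:ℝ) * f x) ^ (2:ℝ) ∂μ) ^ (1/(2:ℝ)))^2 := pow_le_pow_left' h 2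
    _ = (∫⁻ x, k x ∂μ) * (∫⁻ x, k x * f x^2 ∂μ) := by
        rw [mul_pow, e1', e1', hA, hB]

lemma rpow_neg4 {s : ℝ} (hs : 0 < s) : s ^ (-4:ℝ) = (s^4)⁻¹ := by
  rw [show (-4:ℝ) = -((4:ℕ):ℝ) by norm_num, Real.rpow_neg hs.le, Real.rpow_natCast]

lemma kernel_s_bound {η : ℝ} (hη : 0 < η) :
    ∫⁻ s in Ioi η, ENNReal.ofReal (2*η^3/s^4) ≤ ENNReal.ofReal (2/3) := by
  have heq : EqOn (fun s : ℝ => 2*η^3 * s^(-4:ℝ)) (fun s : ℝ => 2*η^3/s^4) (Ioi η) := by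
    intro s hs
    have hs0 : 0 < s := lt_trans hη hs
    simp only [rpow_neg4 hs0]
    ring
  have h1 : IntegrableOn (fun s : ℝ => 2*η^3 * s^(-4:ℝ)) (Ioi η) :=
    (integrableOn_Ioi_rpow_of_lt (by norm_num) hη).const_mul _
  have hint : IntegrableOn (fun s : ℝ => 2*η^3/s^4) (Ioi η) :=
    h1.congr_fun heq measurableSet_Ioi
  rw [← ofReal_integral_eq_lintegral_ofReal hint
    (ae_of_all _ fun s => div_nonneg (by positivity) (by positivity))]
  apply ENNReal.ofReal_le_ofReal
  rw [← setIntegral_congr_fun measurableSet_Ioi heq, integral_const_mul,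
    integral_Ioi_rpow_of_lt (by norm_num) hη]
  rw [show (-4:ℝ) + 1 = -((3:ℕ):ℝ) by norm_num, Real.rpow_neg hη.le, Real.rpow_natCast]
  apply le_of_eq
  have hη3 : (η:ℝ)^3 ≠ 0 := by positivity
  field_simp
  ring

lemma kernel_eta_bound {s : ℝ} (hs : 0 < s) :
    ∫⁻ η in Ioo 0 s, ENNReal.ofReal (2*η^3/s^4) ≤ ENNReal.ofReal (1/2) := by
  have hc : Continuous (fun η : ℝ => 2*η^3/s^4) :=
    (continuous_const.mul (continuous_pow 3)).div_const _
  have hint : IntegrableOn (fun η : ℝ => 2*η^3/s^4) (Ioo 0 s) :=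
    (hc.integrableOn_Icc).mono_set Ioo_subset_Icc_self
  rw [← ofReal_integral_eq_lintegral_ofReal hint
    ((ae_restrict_iff' measurableSet_Ioo).2 (ae_of_all _ fun η hη =>
      div_nonneg (by nlinarith [pow_pos hη.1 3]) (by positivity)))]
  apply ENNReal.ofReal_le_ofReal
  rw [← integral_Ioc_eq_integral_Ioo, ← intervalIntegral.integral_of_le hs.le]
  simp_rw [show ∀ η:ℝ, 2*η^3/s^4 = (2/s^4)*η^3 from fun η => by ring]
  rw [intervalIntegral.integral_const_mul, integral_pow]
  have hs4 : (0:ℝ) < s^4 := by positivity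
  rw [div_mul_eq_mul_div, div_le_iff₀ hs4]
  norm_num
  nlinarith

/-- For `g` an even Schwartz function, `h(η) = ∫_η^∞ (2/s) e^{−(s²−η²)} g(s) ds` is `C¹`
on `(0,∞)`, solves `η²h(η) − (1/2)η h'(η) = g(η)` there, and satisfies the weighted bound
`∫₀^∞ η⁶|h(η)|² dη ≤ C ∫₀^∞ s⁶|g(s)|² ds` with an absolute constant `C`. -/
theorem stmt8 :
    ∃ C : ℝ, 0 < C ∧ ∀ g : SchwartzMap ℝ ℂ, (∀ x : ℝ, g (-x) = g x) →
      (∀ η : ℝ, 0 < η → DifferentiableAt ℝ (hFun ⇑g) η) ∧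
      ContinuousOn (deriv (hFun ⇑g)) (Ioi 0) ∧
      (∀ η : ℝ, 0 < η →
        (η : ℂ)^2 * hFun (⇑g) η - (1/2 : ℂ) * (η : ℂ) * deriv (hFun ⇑g) η = g η) ∧
      (∫⁻ η in Ioi (0:ℝ), ENNReal.ofReal (η^6 * ‖hFun (⇑g) η‖^2))
        ≤ ENNReal.ofReal C * ∫⁻ s in Ioi (0:ℝ), ENNReal.ofReal (s^6 * ‖g s‖^2) := by
  refine ⟨1, one_pos, fun g _ => ?_⟩
  have hderiv : ∀ η : ℝ, 0 < η →
      deriv (hFun ⇑g) η = 2*(η:ℂ) * hFun ⇑g η - (2/(η:ℂ)) * g η :=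
    fun η hη => (hasDeriv g hη).deriv
  refine ⟨fun η hη => (hasDeriv g hη).differentiableAt, ?_, ?_, ?_⟩
  · -- continuity of deriv
    have hcont_h : ContinuousOn (hFun ⇑g) (Ioi 0) := fun x hx =>
      ((hasDeriv g hx).differentiableAt.continuousAt).continuousWithinAt
    have hD : ContinuousOn (fun η : ℝ => 2*(η:ℂ) * hFun ⇑g η - (2/(η:ℂ)) * g η) (Ioi 0) := by
      refine ContinuousOn.sub (ContinuousOn.mul ?_ hcont_h) (ContinuousOn.mul ?_
        g.continuous.continuousOn)
      · exact (continuous_const.mul Complex.continuous_ofReal).continuousOn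
      · exact continuousOn_const.div (Complex.continuous_ofReal.continuousOn)
          (fun x hx => by exact_mod_cast ne_of_gt (hx : (0:ℝ) < x))
    exact hD.congr fun x hx => hderiv x hx
  · intro η hη
    rw [hderiv η hη]
    have hη0 : (η:ℂ) ≠ 0 := by exact_mod_cast hη.ne'
    field_simp
    try ring
  · -- the weighted L² bound
    set K : ℝ → ℝ → ℝ≥0∞ := fun η s => ENNReal.ofReal (2*η^3/s^4) with hK
    set G : ℝ → ℝ≥0∞ := fun s => ENNReal.ofReal (s^3) * (‖g s‖₊ : ℝ≥0∞) with hG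
    have hK_meas : ∀ η : ℝ, Measurable (K η) := fun η =>
      ENNReal.measurable_ofReal.comp (measurable_const.div (measurable_id.pow_const 4))
    have hG_meas : Measurable G :=
      (ENNReal.measurable_ofReal.comp (measurable_id.pow_const 3)).mul
        g.continuous.measurable.enorm
    have hG_ne_top : ∀ s, G s ^ 2 ≠ ∞ := fun s => by
      simp [hG, ENNReal.mul_ne_top, ENNReal.pow_ne_top, ENNReal.coe_ne_top]
    -- step 1 : pointwise bound
    have step1 : ∀ η : ℝ, 0 < η → ENNReal.ofReal (η^6 * ‖hFun ⇑g η‖^2) ≤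
        (∫⁻ s in Ioi η, K η s) * (∫⁻ s in Ioi η, K η s * (G s)^2) := by
      intro η hη
      have hb : (‖hFun ⇑g η‖₊ : ℝ≥0∞) ≤ ∫⁻ s in Ioi η, ENNReal.ofReal (2/s) * ‖g s‖₊ := by
        refine le_trans (enorm_integral_le_lintegral_enorm _) ?_
        refine setLIntegral_mono' measurableSet_Ioi (fun s hs => ?_)
        have hs0 : 0 < s := lt_trans hη hs
        rw [enorm_eq_nnnorm, nnnorm_mul, ENNReal.coe_mul]
        refine mul_le_mul_left ?_ _
        rw [← ENNReal.ofReal_coe_nnreal, coe_nnnorm, Complex.norm_real, Real.norm_eq_abs,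
          abs_of_nonneg (by positivity)]
        apply ENNReal.ofReal_le_ofReal
        have he : Real.exp (-(s^2-η^2)) ≤ 1 := by
          rw [Real.exp_le_one_iff]
          nlinarith [(show η < s from hs).le]
        calc 2/s * Real.exp (-(s^2-η^2)) ≤ 2/s * 1 :=
              mul_le_mul_of_nonneg_left he (by positivity)
          _ = 2/s := mul_one _
      have hmul : ENNReal.ofReal (η^3) * (‖hFun ⇑g η‖₊ : ℝ≥0∞) ≤
          ∫⁻ s in Ioi η, K η s * G s := by
        calc ENNReal.ofReal (η^3) * (‖hFun ⇑g η‖₊ : ℝ≥0∞)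
            ≤ ENNReal.ofReal (η^3) * ∫⁻ s in Ioi η, ENNReal.ofReal (2/s) * ‖g s‖₊ :=
              mul_le_mul_right hb _
          _ = ∫⁻ s in Ioi η, ENNReal.ofReal (η^3) * (ENNReal.ofReal (2/s) * ‖g s‖₊) :=
              (lintegral_const_mul' _ _ ENNReal.ofReal_ne_top).symm
          _ = ∫⁻ s in Ioi η, K η s * G s := by
              refine setLIntegral_congr_fun_ae measurableSet_Ioi (ae_of_all _ fun s hs => ?_)
              have hs0 : 0 < s := lt_trans hη hs
              rw [hK, hG]
              rw [← mul_assoc, ← mul_assoc, ← ENNReal.ofReal_mul (by positivity),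
                ← ENNReal.ofReal_mul (div_nonneg (by positivity) (by positivity))]
              congr 2
              field_simp
      have hsq : ENNReal.ofReal (η^6 * ‖hFun ⇑g η‖^2) =
          (ENNReal.ofReal (η^3) * (‖hFun ⇑g η‖₊ : ℝ≥0∞))^2 := by
        rw [← ENNReal.ofReal_coe_nnreal, coe_nnnorm, ← ENNReal.ofReal_mul (by positivity),
          ← ENNReal.ofReal_pow (by positivity)]
        congr 1
        ring
      rw [hsq]
      calc (ENNReal.ofReal (η^3) * (‖hFun ⇑g η‖₊ : ℝ≥0∞))^2
          ≤ (∫⁻ s in Ioi η, K η s * G s)^2 := pow_le_pow_left' hmul 2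
        _ ≤ (∫⁻ s in Ioi η, K η s) * (∫⁻ s in Ioi η, K η s * (G s)^2) :=
            myCS ((hK_meas η).aemeasurable) (hG_meas.aemeasurable)
    -- the swap
    have hS : MeasurableSet {p : ℝ × ℝ | 0 < p.1 ∧ p.1 < p.2} :=
      (measurableSet_lt measurable_const measurable_fst).inter
        (measurableSet_lt measurable_fst measurable_snd)
    set Ψ : ℝ × ℝ → ℝ≥0∞ :=
      ({p : ℝ × ℝ | 0 < p.1 ∧ p.1 < p.2}).indicator (fun p => K p.1 p.2 * (G p.2)^2) with hΨ
    have hΨ_meas : Measurable Ψ := by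
      refine Measurable.indicator ?_ hS
      exact ((ENNReal.measurable_ofReal.comp
        ((measurable_const.mul (measurable_fst.pow_const 3)).div
          (measurable_snd.pow_const 4)))).mul ((hG_meas.comp measurable_snd).pow_const 2)
    have stepA : ∫⁻ η in Ioi (0:ℝ), (∫⁻ s in Ioi η, K η s * (G s)^2)
        = ∫⁻ η : ℝ, ∫⁻ s : ℝ, Ψ (η, s) := by
      rw [← lintegral_indicator measurableSet_Ioi _]
      refine lintegral_congr fun η => ?_
      by_cases hη : η ∈ Ioi (0:ℝ)
      · rw [indicator_of_mem hη, ← lintegral_indicator measurableSet_Ioi _]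
        refine lintegral_congr fun s => ?_
        by_cases hm : s ∈ Ioi η
        · rw [indicator_of_mem hm, hΨ,
            indicator_of_mem (show ((η,s) : ℝ × ℝ) ∈ {p : ℝ × ℝ | 0 < p.1 ∧ p.1 < p.2} from
              ⟨hη, hm⟩)]
        · rw [indicator_of_notMem hm, hΨ,
            indicator_of_notMem (fun hc => hm hc.2)]
      · rw [indicator_of_notMem hη]
        have h0 : ∀ s : ℝ, Ψ (η, s) = 0 := fun s =>
          indicator_of_notMem (fun hc => hη hc.1) _
        simp [h0]
    have stepB : ∫⁻ η : ℝ, ∫⁻ s : ℝ, Ψ (η, s) = ∫⁻ s : ℝ, ∫⁻ η : ℝ, Ψ (η, s) :=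
      lintegral_lintegral_swap hΨ_meas.aemeasurable
    have stepC : ∫⁻ s : ℝ, ∫⁻ η : ℝ, Ψ (η, s)
        ≤ ENNReal.ofReal (1/2) * ∫⁻ s in Ioi (0:ℝ), (G s)^2 := by
      have inner : ∀ s : ℝ, (∫⁻ η : ℝ, Ψ (η, s)) =
          (Ioi (0:ℝ)).indicator (fun s => (∫⁻ η in Ioo 0 s, K η s) * (G s)^2) s := by
        intro s
        by_cases hs : s ∈ Ioi (0:ℝ)
        · rw [indicator_of_mem hs, ← lintegral_mul_const' _ _ (hG_ne_top s),
            ← lintegral_indicator measurableSet_Ioo _]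
          refine lintegral_congr fun η => ?_
          by_cases hm : η ∈ Ioo (0:ℝ) s
          · rw [indicator_of_mem hm, hΨ,
              indicator_of_mem (show ((η,s) : ℝ × ℝ) ∈ {p : ℝ × ℝ | 0 < p.1 ∧ p.1 < p.2} from
                ⟨hm.1, hm.2⟩)]
          · rw [indicator_of_notMem hm, hΨ,
              indicator_of_notMem (fun hc => hm ⟨hc.1, hc.2⟩)]
        · rw [indicator_of_notMem hs]
          have h0 : ∀ η : ℝ, Ψ (η, s) = 0 := fun η =>
            indicator_of_notMem (fun hc => hs (lt_trans hc.1 hc.2)) _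
          simp [h0]
      calc ∫⁻ s : ℝ, ∫⁻ η : ℝ, Ψ (η, s)
          = ∫⁻ s in Ioi (0:ℝ), (∫⁻ η in Ioo 0 s, K η s) * (G s)^2 := by
            rw [← lintegral_indicator measurableSet_Ioi _]
            exact lintegral_congr inner
        _ ≤ ∫⁻ s in Ioi (0:ℝ), ENNReal.ofReal (1/2) * (G s)^2 :=
            setLIntegral_mono' measurableSet_Ioi (fun s hs =>
              mul_le_mul_left (kernel_eta_bound hs) _)
        _ = ENNReal.ofReal (1/2) * ∫⁻ s in Ioi (0:ℝ), (G s)^2 :=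
            lintegral_const_mul' _ _ ENNReal.ofReal_ne_top
    have hGsq : ∫⁻ s in Ioi (0:ℝ), (G s)^2
        = ∫⁻ s in Ioi (0:ℝ), ENNReal.ofReal (s^6 * ‖g s‖^2) := by
      refine setLIntegral_congr_fun_ae measurableSet_Ioi (ae_of_all _ fun s hs => ?_)
      rw [hG]
      rw [mul_pow, ← ENNReal.ofReal_coe_nnreal, coe_nnnorm,
        ← ENNReal.ofReal_pow (pow_nonneg (le_of_lt hs) 3), ← ENNReal.ofReal_pow (norm_nonneg _),
        ← ENNReal.ofReal_mul (by positivity)]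
      congr 1
      ring
    calc ∫⁻ η in Ioi (0:ℝ), ENNReal.ofReal (η^6 * ‖hFun ⇑g η‖^2)
        ≤ ∫⁻ η in Ioi (0:ℝ), ENNReal.ofReal (2/3) * (∫⁻ s in Ioi η, K η s * (G s)^2) :=
          setLIntegral_mono' measurableSet_Ioi (fun η hη =>
            le_trans (step1 η hη) (mul_le_mul_left (kernel_s_bound hη) _))
      _ = ENNReal.ofReal (2/3) * ∫⁻ η in Ioi (0:ℝ), (∫⁻ s in Ioi η, K η s * (G s)^2) :=
          lintegral_const_mul' _ _ ENNReal.ofReal_ne_top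
      _ ≤ ENNReal.ofReal (2/3) * (ENNReal.ofReal (1/2) * ∫⁻ s in Ioi (0:ℝ), (G s)^2) := by
          rw [stepA, stepB]
          exact mul_le_mul_right stepC _
      _ ≤ ENNReal.ofReal 1 * ∫⁻ s in Ioi (0:ℝ), ENNReal.ofReal (s^6 * ‖g s‖^2) := by
          rw [← hGsq, ← mul_assoc]
          refine mul_le_mul_left ?_ _
          rw [← ENNReal.ofReal_mul (by norm_num)]
          exact ENNReal.ofReal_le_ofReal (by norm_num)
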